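/- arXiv:2311.10209 — 5 statements merged into one kernel-verified Lean document; each statement's English description precedes it below -/
import Mathlib

section
/- If κ is an uncountable cardinal, then the space κ^ω can be written as a union of ℵ₁ many nowhere dense sets; in particular, cov(M_{κ^ω}) = ℵ₁, i.e., the least number of meager sets needed to cover κ^ω is ℵ₁. -/
/-!
Fix a set `S ⊆ κ` of size `ℵ₁`. For `a ∈ S` the sequences omitting the value `a` form a closed
set with empty interior, since changing one far-out coordinate of any sequence to `a` moves it
arbitrarily little. A single sequence has only countably many values, so it omits some `a ∈ S`:
these `ℵ₁` nowhere dense sets cover `κ^ω`. Conversely `κ^ω` is completely metrizable, hence a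
Baire space, so no countable family of meagre sets covers it.
-/

open Cardinal hiding univ
open Set Filter Topology Function

section Omitting

variable {K : Type*}

def seqOmitting (a : K) : Set (ℕ → K) := {x | a ∉ range x}

theorem seqOmitting_injective : Injective (seqOmitting : K → Set (ℕ → K)) := by
  intro a b hab
  by_contra hne
  have hb : (fun _ => b) ∈ seqOmitting a := by simpa [seqOmitting] using Ne.symm hne
  rw [hab] at hb
  exact hb ⟨0, rfl⟩

theorem sUnion_image_seqOmitting {S : Set K} (hS : ¬S.Countable) :
    ⋃₀ (seqOmitting '' S) = univ := by
  refine eq_univ_of_forall fun x => ?_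
  obtain ⟨a, haS, hax⟩ := not_subset.1 fun h => hS ((countable_range x).mono h)
  exact ⟨seqOmitting a, mem_image_of_mem _ haS, hax⟩

variable [TopologicalSpace K]

theorem tendsto_update_atTop_nhds (x : ℕ → K) (a : K) :
    Tendsto (fun n => update x n a) atTop (𝓝 x) := by
  refine tendsto_pi_nhds.2 fun i => tendsto_const_nhds.congr' ?_
  filter_upwards [eventually_gt_atTop i] with n hn
  rw [update_of_ne hn.ne]

theorem dense_compl_seqOmitting (a : K) : Dense (seqOmitting a)ᶜ := fun x =>
  mem_closure_of_tendsto (tendsto_update_atTop_nhds x a)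
    (Eventually.of_forall fun n => not_not_intro ⟨n, update_self n a x⟩)

variable [DiscreteTopology K]

theorem isClosed_seqOmitting (a : K) : IsClosed (seqOmitting a) := by
  have h : seqOmitting a = ⋂ n, (fun x : ℕ → K => x n) ⁻¹' {a}ᶜ := by
    ext x
    simp [seqOmitting]
  rw [h]
  exact isClosed_iInter fun n => (isClosed_discrete _).preimage (continuous_apply n)

theorem isNowhereDense_seqOmitting (a : K) : IsNowhereDense (seqOmitting a) := by
  rw [(isClosed_seqOmitting a).isNowhereDense_iff]
  exact interior_eq_empty_iff_dense_compl.2 (dense_compl_seqOmitting a)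

end Omitting

theorem aleph_one_le_mk_of_sUnion_eq_univ {X : Type*} [TopologicalSpace X] [BaireSpace X]
    [Nonempty X] {F : Set (Set X)} (hF : ∀ s ∈ F, IsMeagre s) (hcover : ⋃₀ F = univ) :
    ℵ₁ ≤ #F := by
  by_contra! hlt
  have : Countable F := (le_aleph0_iff_set_countable.1 (lt_aleph_one_iff.1 hlt)).to_subtype
  have hmeagre : IsMeagre (⋃₀ F) := by
    rw [sUnion_eq_iUnion]
    exact isMeagre_iUnion fun s => hF s s.2
  rw [hcover] at hmeagre
  exact not_isMeagre_of_isOpen isOpen_univ univ_nonempty hmeagre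

/-- If `K` is an uncountable discrete space, then `K^ω` is a union of `ℵ₁` many
nowhere dense sets, and the least number of meager sets needed to cover `K^ω` is
exactly `ℵ₁`. -/
theorem stmt_1 {K : Type*} [TopologicalSpace K] [DiscreteTopology K]
    (hK : Cardinal.aleph0 < Cardinal.mk K) :
    (∃ F : Set (Set (ℕ → K)), Cardinal.mk F ≤ Cardinal.aleph 1 ∧
        (∀ s ∈ F, IsNowhereDense s) ∧ ⋃₀ F = Set.univ) ∧
    sInf {c : Cardinal | ∃ F : Set (Set (ℕ → K)),
        (∀ s ∈ F, IsMeagre s) ∧ ⋃₀ F = Set.univ ∧ Cardinal.mk F = c}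
      = Cardinal.aleph 1 := by
  have : Nonempty K := mk_ne_zero_iff.1 (aleph0_pos.trans hK).ne'
  obtain ⟨S, hS⟩ := le_mk_iff_exists_set.1 (aleph_one_le_iff.2 hK)
  have hF : #(seqOmitting '' S) = ℵ₁ := by
    rw [mk_image_eq seqOmitting_injective, hS]
  have hcover : ⋃₀ (seqOmitting '' S) = univ := by
    refine sUnion_image_seqOmitting fun hc => ?_
    rw [← le_aleph0_iff_set_countable, hS] at hc
    exact hc.not_gt aleph0_lt_aleph_one
  have hnwd : ∀ s ∈ seqOmitting '' S, IsNowhereDense s :=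
    forall_mem_image.2 fun a _ => isNowhereDense_seqOmitting a
  refine ⟨⟨_, hF.le, hnwd, hcover⟩, IsLeast.csInf_eq ⟨⟨_, fun s hs => (hnwd s hs).isMeagre,
    hcover, hF⟩, ?_⟩⟩
  rintro c ⟨G, hG, hGcover, rfl⟩
  exact aleph_one_le_mk_of_sUnion_eq_univ hG hGcover
end

section
/- Let X be a metric space and B a π-base for X. Then there exists a maximal cellular family S in X with S ⊆ B and |S| = w(X). -/
/-- The weight of a topological space: the least cardinality of a topological basis. -/
noncomputable def topWeight (X : Type*) [TopologicalSpace X] : Cardinal :=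
  sInf {c : Cardinal | ∃ B : Set (Set X),
    TopologicalSpace.IsTopologicalBasis B ∧ Cardinal.mk B = c}

/-!
Maximal `1/(n+1)`-separated sets `Dₙ` of a metric space give cellular families of balls of
size `|Dₙ|`, and `⋃ Dₙ` is dense, so `w(X) ≤ ℵ₀ · supₙ |Dₙ|`. For uncountable weight the supremum
`κ = supₙ |Dₙ|` has countable cofinality, and then, as in the Erdős–Tarski theorem, some cellular
family has size `κ`: take a maximal disjoint family `H` of open sets all of whose nonempty open
subsets have the same cellularity. If some member of `H` has cellularity `≥ κ`, it contains
countably many disjoint open sets, the `n`-th carrying a cellular family larger than `|Dₙ|`.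
Otherwise, since every cellular family injects fibrewise into `H`, the cellularities of the members
of `H` are cofinal in `κ`, and countably many members with increasing cellularity do the same job.
(Countable weight is easy: an infinite Hausdorff space has an infinite cellular family.)
Finally, a cellular family of size `w(X)` is shrunk into the π-base and extended to a maximal one
there by Zorn's lemma; no cellular family is larger than `w(X)`.
-/

open Set TopologicalSpace Cardinal Function

theorem exists_maximal_pairwise_superset {α : Type*} (r : α → α → Prop) {s t : Set α}
    (hts : t ⊆ s) (ht : t.Pairwise r) :
    ∃ m, t ⊆ m ∧ Maximal (fun m => m ⊆ s ∧ m.Pairwise r) m :=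
  zorn_subset_nonempty {m | m ⊆ s ∧ m.Pairwise r}
    (fun c hc hchain _ => ⟨⋃₀ c, ⟨sUnion_subset fun _ hm => (hc hm).1,
      hchain.pairwise_sUnion.2 fun _ hm => (hc hm).2⟩, fun _ => subset_sUnion_of_mem⟩)
    t ⟨hts, ht⟩

section Shrink

variable {α : Type*} {C : Set (Set α)} {f : Set α → Set α}

theorem injOn_of_pairwise_disjoint_of_subset (hC : C.Pairwise Disjoint)
    (hf : ∀ V ∈ C, f V ⊆ V) (hne : ∀ V ∈ C, (f V).Nonempty) : InjOn f C := by
  intro V hV V' hV' hVV'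
  by_contra hne'
  have hdisj := (hC hV hV' hne').mono (hf V hV) (hVV' ▸ hf V' hV')
  exact (hne V hV).ne_empty (disjoint_self.1 hdisj)

theorem pairwise_disjoint_image_of_subset (hC : C.Pairwise Disjoint) (hf : ∀ V ∈ C, f V ⊆ V) :
    (f '' C).Pairwise Disjoint := by
  rintro _ ⟨V, hV, rfl⟩ _ ⟨V', hV', rfl⟩ hne
  exact (hC hV hV' fun h => hne (h ▸ rfl)).mono (hf V hV) (hf V' hV')

end Shrink

theorem exists_strictMono_seq_mem_of_cofinal {α : Type*} [LinearOrder α] {s : Set α} {κ : α}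
    (hsκ : ∀ a ∈ s, a < κ) (hcof : ∀ c < κ, ∃ a ∈ s, c < a) {l : ℕ → α} (hl : ∀ n, l n < κ) :
    ∃ μ : ℕ → α, StrictMono μ ∧ ∀ n, μ n ∈ s ∧ l n < μ n := by
  have hnext (c : α) : ∃ a, c < κ → a ∈ s ∧ c < a := by
    by_cases hc : c < κ
    · obtain ⟨a, ha, hca⟩ := hcof c hc
      exact ⟨a, fun _ => ⟨ha, hca⟩⟩
    · exact ⟨c, fun h => absurd h hc⟩
  choose next hnext using hnext
  let μ : ℕ → α := fun n => Nat.rec (next (l 0)) (fun k a => next (max (l (k + 1)) a)) n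
  have hstep (k : ℕ) (hk : μ k ∈ s) : μ (k + 1) ∈ s ∧ max (l (k + 1)) (μ k) < μ (k + 1) :=
    hnext _ (max_lt (hl _) (hsκ _ hk))
  have hmem (n : ℕ) : μ n ∈ s := by
    induction n with
    | zero => exact (hnext _ (hl 0)).1
    | succ k ih => exact (hstep k ih).1
  refine ⟨μ, strictMono_nat_of_lt_succ fun k => (le_max_right _ _).trans_lt (hstep k (hmem k)).2,
    fun n => ⟨hmem n, ?_⟩⟩
  cases n with
  | zero => exact (hnext _ (hl 0)).2
  | succ k => exact (le_max_left _ _).trans_lt (hstep k (hmem k)).2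

universe u

section Topological

variable {X : Type u} [TopologicalSpace X] {U U' : Set X} {C : Set (Set X)}
  {l : ℕ → Cardinal.{u}}

structure IsCellularIn (U : Set X) (C : Set (Set X)) : Prop where
  isOpen : ∀ V ∈ C, IsOpen V
  nonempty : ∀ V ∈ C, V.Nonempty
  subset : ∀ V ∈ C, V ⊆ U
  pairwise_disjoint : C.Pairwise Disjoint

def MeetsEveryOpen (S : Set (Set X)) : Prop :=
  ∀ V : Set X, IsOpen V → V.Nonempty → ∃ U ∈ S, (V ∩ U).Nonempty

noncomputable def cellularityOn (U : Set X) : Cardinal.{u} :=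
  ⨆ C : {C : Set (Set X) // IsCellularIn U C}, #C.1

def IsCellularHomogeneous (U : Set X) : Prop :=
  IsOpen U ∧ U.Nonempty ∧
    ∀ W ⊆ U, IsOpen W → W.Nonempty → cellularityOn W = cellularityOn U

theorem IsCellularIn.mono (hC : IsCellularIn U C)
    (hUU' : U ⊆ U') : IsCellularIn U' C :=
  ⟨hC.isOpen, hC.nonempty, fun V hV => (hC.subset V hV).trans hUU', hC.pairwise_disjoint⟩

theorem IsCellularIn.univ_of_pairwise (hC : ∀ V ∈ C, IsOpen V ∧ V.Nonempty)
    (hdisj : C.Pairwise Disjoint) : IsCellularIn univ C :=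
  ⟨fun V hV => (hC V hV).1, fun V hV => (hC V hV).2, fun V _ => subset_univ V, hdisj⟩

theorem bddAbove_range_mk_cellularIn (U : Set X) :
    BddAbove (range fun C : {C : Set (Set X) // IsCellularIn U C} => #C.1) :=
  ⟨#(Set X), by rintro _ ⟨C, rfl⟩; exact mk_set_le C.1⟩

theorem IsCellularIn.mk_le_cellularityOn (hC : IsCellularIn U C) : #C ≤ cellularityOn U :=
  le_ciSup (bddAbove_range_mk_cellularIn U) ⟨C, hC⟩

theorem exists_lt_mk_of_lt_cellularityOn {c : Cardinal} (h : c < cellularityOn U) :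
    ∃ C, IsCellularIn U C ∧ c < #C := by
  obtain ⟨⟨C, hC⟩, hc⟩ := exists_lt_of_lt_ciSup' h
  exact ⟨C, hC, hc⟩

theorem cellularityOn_mono (h : U ⊆ U') : cellularityOn U ≤ cellularityOn U' :=
  ciSup_le' fun C => (C.2.mono h).mk_le_cellularityOn

theorem IsCellularIn.mk_inter_nonempty_le (hC : IsCellularIn univ C) (hU : IsOpen U) :
    #{V ∈ C | (V ∩ U).Nonempty} ≤ cellularityOn U := by
  set C' := {V ∈ C | (V ∩ U).Nonempty}
  have hdisj : C'.Pairwise Disjoint := hC.pairwise_disjoint.mono fun _ hV => hV.1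
  have hcell : IsCellularIn U ((· ∩ U) '' C') :=
    ⟨by rintro _ ⟨V, hV, rfl⟩; exact (hC.isOpen V hV.1).inter hU,
     by rintro _ ⟨V, hV, rfl⟩; exact hV.2,
     by rintro _ ⟨V, -, rfl⟩; exact inter_subset_right,
     pairwise_disjoint_image_of_subset hdisj fun _ _ => inter_subset_left⟩
  rw [← mk_image_eq_of_injOn _ _
    (injOn_of_pairwise_disjoint_of_subset hdisj (fun _ _ => inter_subset_left) fun _ hV => hV.2)]
  exact hcell.mk_le_cellularityOn

theorem mk_le_mk_mul_of_meetsEveryOpen {H : Set (Set X)} {c : Cardinal}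
    (hH : MeetsEveryOpen H) (hHo : ∀ U ∈ H, IsOpen U) (hHc : ∀ U ∈ H, cellularityOn U ≤ c)
    (hC : IsCellularIn univ C) : #C ≤ #H * c := by
  have hmeet (V : C) : ∃ U : H, ((V : Set X) ∩ U).Nonempty := by
    obtain ⟨U, hU, hVU⟩ := hH V (hC.isOpen V V.2) (hC.nonempty V V.2)
    exact ⟨⟨U, hU⟩, hVU⟩
  choose G hG using hmeet
  refine mk_le_mk_mul_of_mk_preimage_le G fun U => ?_
  have hfiber (V : G ⁻¹' {U}) : ((V : C) : Set X) ∈ {V ∈ C | (V ∩ U).Nonempty} :=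
    ⟨V.1.2, by simpa only [mem_preimage, mem_singleton_iff.1 V.2] using hG V.1⟩
  calc #(G ⁻¹' {U}) ≤ #{V ∈ C | (V ∩ U).Nonempty} :=
        mk_le_of_injective (f := fun V => ⟨_, hfiber V⟩)
          fun V V' h => Subtype.ext (Subtype.ext (congrArg Subtype.val h :))
    _ ≤ cellularityOn (U : Set X) := hC.mk_inter_nonempty_le (hHo U U.2)
    _ ≤ c := hHc U U.2

theorem topWeight_le_mk {B : Set (Set X)} (hB : IsTopologicalBasis B) : topWeight X ≤ #B :=
  csInf_le' ⟨B, hB, rfl⟩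

theorem exists_isTopologicalBasis_mk_eq_topWeight :
    ∃ B : Set (Set X), IsTopologicalBasis B ∧ #B = topWeight X :=
  csInf_mem (s := {c | ∃ B : Set (Set X), IsTopologicalBasis B ∧ #B = c})
    ⟨_, _, isTopologicalBasis_opens, rfl⟩

theorem IsCellularIn.exists_subset_mk_eq {B : Set (Set X)} (hC : IsCellularIn U C)
    (hCB : ∀ V ∈ C, ∃ W ∈ B, W.Nonempty ∧ W ⊆ V) :
    ∃ C' ⊆ B, C'.Pairwise Disjoint ∧ #C' = #C := by
  choose! f hfB hfne hfV using hCB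
  exact ⟨f '' C, image_subset_iff.2 hfB, pairwise_disjoint_image_of_subset hC.pairwise_disjoint hfV,
    mk_image_eq_of_injOn _ _ (injOn_of_pairwise_disjoint_of_subset hC.pairwise_disjoint hfV hfne)⟩

theorem IsCellularIn.mk_le_topWeight (hC : IsCellularIn U C) :
    #C ≤ topWeight X := by
  obtain ⟨B, hB, hBw⟩ := exists_isTopologicalBasis_mk_eq_topWeight (X := X)
  obtain ⟨C', hC'B, -, hC'C⟩ := hC.exists_subset_mk_eq (B := B) fun V hV => by
    obtain ⟨x, hx⟩ := hC.nonempty V hV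
    obtain ⟨W, hW, hxW, hWV⟩ := hB.exists_subset_of_mem_open hx (hC.isOpen V hV)
    exact ⟨W, hW, ⟨x, hxW⟩, hWV⟩
  rw [← hC'C, ← hBw]
  exact mk_le_mk_of_subset hC'B

theorem exists_cellular_mk_eq_topWeight_of_discrete [DiscreteTopology X] :
    ∃ C : Set (Set X), IsCellularIn univ C ∧ #C = topWeight X := by
  have hC : IsCellularIn univ (range (singleton : X → Set X)) :=
    .univ_of_pairwise (by rintro _ ⟨x, rfl⟩; exact ⟨isOpen_discrete _, singleton_nonempty x⟩)
      pairwiseDisjoint_range_singleton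
  have hbasis : IsTopologicalBasis (range (singleton : X → Set X)) := by
    simpa only [range, eq_comm] using isTopologicalBasis_singletons X
  exact ⟨_, hC, le_antisymm hC.mk_le_topWeight (topWeight_le_mk hbasis)⟩

theorem exists_pairwise_disjoint_superset_meetsEveryOpen {B S₀ : Set (Set X)}
    (hBne : ∀ U ∈ B, U.Nonempty) (hπ : ∀ V, IsOpen V → V.Nonempty → ∃ U ∈ B, U ⊆ V)
    (hS₀B : S₀ ⊆ B) (hS₀ : S₀.Pairwise Disjoint) :
    ∃ S, S₀ ⊆ S ∧ S ⊆ B ∧ S.Pairwise Disjoint ∧ MeetsEveryOpen S := by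
  obtain ⟨S, hS₀S, ⟨hSB, hS⟩, hmax⟩ := exists_maximal_pairwise_superset Disjoint hS₀B hS₀
  refine ⟨S, hS₀S, hSB, hS, fun V hV hVne => ?_⟩
  by_contra! hdisj
  obtain ⟨U, hUB, hUV⟩ := hπ V hV hVne
  have hUS : U ∈ S := hmax ⟨insert_subset hUB hSB, hS.insert fun W hW _ =>
      ⟨(disjoint_iff_inter_eq_empty.2 (hdisj W hW)).mono_left hUV,
       (disjoint_iff_inter_eq_empty.2 (hdisj W hW)).symm.mono_right hUV⟩⟩
    (subset_insert U S) (mem_insert U S)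
  have := hdisj U hUS
  rw [inter_eq_self_of_subset_right hUV] at this
  exact (hBne U hUB).ne_empty this

theorem exists_isCellularHomogeneous_subset (hU : IsOpen U) (hne : U.Nonempty) :
    ∃ V ⊆ U, IsCellularHomogeneous V := by
  obtain ⟨V, ⟨hVU, hV, hVne⟩, hmin⟩ := (InvImage.wf cellularityOn wellFounded_lt).has_min
    {V | V ⊆ U ∧ IsOpen V ∧ V.Nonempty} ⟨U, subset_rfl, hU, hne⟩
  exact ⟨V, hVU, hV, hVne, fun W hWV hW hWne =>
    (cellularityOn_mono hWV).antisymm (not_lt.1 (hmin W ⟨hWV.trans hVU, hW, hWne⟩))⟩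

theorem exists_cellular_iSup_le_of_pairwise_disjoint {W : ℕ → Set X}
    (hW : Pairwise (Disjoint on W)) (hl : ∀ n, l n < cellularityOn (W n)) :
    ∃ C : Set (Set X), IsCellularIn univ C ∧ ⨆ n, l n ≤ #C := by
  choose C hC hlC using fun n => exists_lt_mk_of_lt_cellularityOn (hl n)
  refine ⟨⋃ n, C n, ⟨?_, ?_, fun V _ => subset_univ V, ?_⟩,
    ciSup_le' fun n => (hlC n).le.trans (mk_le_mk_of_subset (subset_iUnion C n))⟩
  · intro V hV
    obtain ⟨n, hV⟩ := mem_iUnion.1 hV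
    exact (hC n).isOpen V hV
  · intro V hV
    obtain ⟨n, hV⟩ := mem_iUnion.1 hV
    exact (hC n).nonempty V hV
  · intro V hV V' hV' hVV'
    obtain ⟨n, hV⟩ := mem_iUnion.1 hV
    obtain ⟨m, hV'⟩ := mem_iUnion.1 hV'
    obtain rfl | hnm := eq_or_ne n m
    · exact (hC n).pairwise_disjoint hV hV' hVV'
    · exact (hW hnm).mono ((hC n).subset V hV) ((hC m).subset V' hV')

theorem IsCellularHomogeneous.exists_cellular_iSup_le (hU : IsCellularHomogeneous U)
    (hlU : ∀ n, l n < cellularityOn U) (hU₀ : ℵ₀ < cellularityOn U) :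
    ∃ C : Set (Set X), IsCellularIn univ C ∧ ⨆ n, l n ≤ #C := by
  obtain ⟨C, hC, hC₀⟩ := exists_lt_mk_of_lt_cellularityOn hU₀
  have : Infinite C := infinite_iff.2 hC₀.le
  let W : ℕ → Set X := fun n => Infinite.natEmbedding C n
  have hWC (n : ℕ) : W n ∈ C := (Infinite.natEmbedding C n).2
  refine exists_cellular_iSup_le_of_pairwise_disjoint (W := W)
    (hC.pairwise_disjoint.on_injective
      (Subtype.val_injective.comp (Infinite.natEmbedding C).injective) hWC) fun n => ?_
  rw [hU.2.2 (W n) (hC.subset _ (hWC n)) (hC.isOpen _ (hWC n)) (hC.nonempty _ (hWC n))]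
  exact hlU n

theorem exists_cellular_iSup_le_of_cofinal {H : Set (Set X)} (hH : H.Pairwise Disjoint)
    (hHl : ∀ U ∈ H, cellularityOn U < ⨆ n, l n)
    (hcof : ∀ c < ⨆ n, l n, ∃ U ∈ H, c < cellularityOn U) (hl : ∀ n, l n < ⨆ n, l n) :
    ∃ C : Set (Set X), IsCellularIn univ C ∧ ⨆ n, l n ≤ #C := by
  obtain ⟨μ, hμ, hμH⟩ := exists_strictMono_seq_mem_of_cofinal (s := cellularityOn '' H)
    (by rintro _ ⟨U, hU, rfl⟩; exact hHl U hU)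
    (fun c hc => by obtain ⟨U, hU, hcU⟩ := hcof c hc; exact ⟨_, ⟨U, hU, rfl⟩, hcU⟩) hl
  choose U hUH hUμ using fun n => (hμH n).1
  have hUinj : Injective U := fun m n hmn => hμ.injective (by rw [← hUμ m, ← hUμ n, hmn])
  exact exists_cellular_iSup_le_of_pairwise_disjoint (hH.on_injective hUinj hUH)
    fun n => (hUμ n).symm ▸ (hμH n).2

theorem exists_cellular_iSup_le (hl : ∀ n, ∃ C : Set (Set X), IsCellularIn univ C ∧ l n ≤ #C)
    (hκ : ℵ₀ < ⨆ n, l n) : ∃ C : Set (Set X), IsCellularIn univ C ∧ ⨆ n, l n ≤ #C := by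
  set κ := ⨆ n, l n
  by_cases hattained : ∃ n, κ ≤ l n
  · obtain ⟨n, hn⟩ := hattained
    obtain ⟨C, hC, hlC⟩ := hl n
    exact ⟨C, hC, hn.trans hlC⟩
  push Not at hattained
  obtain ⟨H, -, hHhom, hHdisj, hHmeets⟩ :=
    exists_pairwise_disjoint_superset_meetsEveryOpen (B := {U : Set X | IsCellularHomogeneous U})
      (fun _ hU => hU.2.1) (fun _ hV hVne =>
        let ⟨W, hWV, hW⟩ := exists_isCellularHomogeneous_subset hV hVne; ⟨W, hW, hWV⟩)
      (empty_subset _) (pairwise_empty _)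
  have hHcell : IsCellularIn univ H :=
    .univ_of_pairwise (fun _ hU => ⟨(hHhom hU).1, (hHhom hU).2.1⟩) hHdisj
  by_cases hHκ : κ ≤ #H
  · exact ⟨H, hHcell, hHκ⟩
  by_cases hUκ : ∃ U ∈ H, κ ≤ cellularityOn U
  · obtain ⟨U, hUH, hUκ⟩ := hUκ
    exact (hHhom hUH).exists_cellular_iSup_le (fun n => (hattained n).trans_le hUκ)
      (hκ.trans_le hUκ)
  push Not at hHκ hUκ
  refine exists_cellular_iSup_le_of_cofinal hHdisj hUκ (fun c hc => ?_) hattained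
  -- otherwise every cellular family has size at most `#H * c < κ`
  by_contra! hcH
  have hbound : max (max #H c) ℵ₀ < κ := max_lt (max_lt hHκ hc) hκ
  refine hbound.not_ge (ciSup_le' fun n => ?_)
  obtain ⟨C, hC, hlC⟩ := hl n
  exact hlC.trans ((mk_le_mk_mul_of_meetsEveryOpen hHmeets (fun U hU => (hHhom hU).1) hcH
    hC).trans (mul_le_max _ _))

theorem exists_cellular_mk_eq_aleph0 [T2Space X] [Infinite X] :
    ∃ C : Set (Set X), IsCellularIn univ C ∧ #C = ℵ₀ := by
  obtain ⟨U, hUinf, hUo, hUdisj⟩ := exists_seq_infinite_isOpen_pairwise_disjoint X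
  have hUinj : Injective U := fun m n hmn => hUdisj.eq (by
    rw [onFun, hmn, disjoint_self]; exact (hUinf n).nonempty.ne_empty)
  refine ⟨range U, .univ_of_pairwise ?_ hUdisj.range_pairwise, ?_⟩
  · rintro _ ⟨n, rfl⟩
    exact ⟨hUo n, (hUinf n).nonempty⟩
  · simpa using mk_range_eq_of_injective hUinj

end Topological

section Metric

open Metric

variable {X : Type u}

section Pseudo

variable [PseudoMetricSpace X]

theorem exists_separated_net {ε : ℝ} (hε : 0 < ε) :
    ∃ D : Set X, D.Pairwise (fun x y => ε ≤ dist x y) ∧ ∀ x, ∃ y ∈ D, dist x y < ε := by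
  obtain ⟨D, -, ⟨-, hD⟩, hmax⟩ := exists_maximal_pairwise_superset
    (fun x y : X => ε ≤ dist x y) (subset_univ ∅) (pairwise_empty _)
  refine ⟨D, hD, fun x => ?_⟩
  by_contra! hfar
  have hxD : x ∈ D := hmax ⟨subset_univ _, hD.insert fun y hy _ =>
    ⟨hfar y hy, dist_comm x y ▸ hfar y hy⟩⟩ (subset_insert x D) (mem_insert x D)
  exact (hfar x hxD).not_gt (by simpa using hε)

theorem exists_cellular_mk_eq_of_pairwise_le_dist {ε : ℝ} (hε : 0 < ε) {D : Set X}
    (hD : D.Pairwise (fun x y => ε ≤ dist x y)) :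
    ∃ C : Set (Set X), IsCellularIn univ C ∧ #C = #D := by
  have hdisj {x y : X} (hx : x ∈ D) (hy : y ∈ D) (hxy : x ≠ y) :
      Disjoint (ball x (ε / 2)) (ball y (ε / 2)) :=
    ball_disjoint_ball (by linarith [hD hx hy hxy])
  refine ⟨(ball · (ε / 2)) '' D, .univ_of_pairwise ?_ ?_, mk_image_eq_of_injOn _ _ ?_⟩
  · rintro _ ⟨x, -, rfl⟩
    exact ⟨isOpen_ball, nonempty_ball.2 (half_pos hε)⟩
  · rintro _ ⟨x, hx, rfl⟩ _ ⟨y, hy, rfl⟩ hne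
    exact hdisj hx hy fun h => hne (h ▸ rfl)
  · intro x hx y hy (hxy : ball x (ε / 2) = ball y (ε / 2))
    by_contra hne
    exact (hdisj hx hy hne).ne_of_mem (mem_ball_self (half_pos hε))
      (hxy ▸ mem_ball_self (half_pos hε)) rfl

theorem topWeight_le_mk_mul_aleph0_of_dense {D : Set X} (hD : Dense D) :
    topWeight X ≤ #D * ℵ₀ := by
  let f : D × ℕ → Set X := fun p => ball p.1 (1 / (p.2 + 1))
  have hbasis : IsTopologicalBasis (range f) := by
    refine isTopologicalBasis_of_isOpen_of_nhds (by rintro _ ⟨p, rfl⟩; exact isOpen_ball)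
      fun x U hxU hU => ?_
    obtain ⟨ε, hε, hxεU⟩ := Metric.isOpen_iff.1 hU x hxU
    obtain ⟨n, hn⟩ := exists_nat_one_div_lt (half_pos hε)
    obtain ⟨d, hxd, hdD⟩ := Metric.dense_iff.1 hD x _ (Nat.one_div_pos_of_nat (n := n))
    refine ⟨f (⟨d, hdD⟩, n), mem_range_self _, mem_ball_comm.1 hxd,
      (ball_subset_ball' ?_).trans hxεU⟩
    rw [mem_ball] at hxd
    linarith
  calc topWeight X ≤ #(range f) := topWeight_le_mk hbasis
    _ ≤ #(D × ℕ) := mk_range_le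
    _ = #D * ℵ₀ := by simp

theorem exists_cellular_seq_topWeight_le :
    ∃ l : ℕ → Cardinal.{u}, (∀ n, ∃ C : Set (Set X), IsCellularIn univ C ∧ l n ≤ #C) ∧
      topWeight X ≤ ℵ₀ * ⨆ n, l n := by
  choose D hDsep hDnet using fun n : ℕ =>
    exists_separated_net (X := X) (Nat.one_div_pos_of_nat (n := n))
  refine ⟨fun n => #(D n), fun n => ?_, ?_⟩
  · obtain ⟨C, hC, hCD⟩ :=
      exists_cellular_mk_eq_of_pairwise_le_dist Nat.one_div_pos_of_nat (hDsep n)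
    exact ⟨C, hC, hCD.ge⟩
  have hdense : Dense (⋃ n, D n) := Metric.dense_iff.2 fun x r hr => by
    obtain ⟨n, hn⟩ := exists_nat_one_div_lt hr
    obtain ⟨y, hy, hxy⟩ := hDnet n x
    exact ⟨y, by rw [mem_ball, dist_comm]; linarith, mem_iUnion.2 ⟨n, hy⟩⟩
  calc topWeight X ≤ #(⋃ n, D n) * ℵ₀ := topWeight_le_mk_mul_aleph0_of_dense hdense
    _ ≤ ℵ₀ * (⨆ n, #(D n)) * ℵ₀ := by gcongr; simpa using mk_iUnion_le_lift D
    _ = ℵ₀ * ⨆ n, #(D n) := by rw [mul_right_comm, aleph0_mul_aleph0]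

theorem exists_cellular_mk_eq_topWeight_of_aleph0_lt (hw : ℵ₀ < topWeight X) :
    ∃ C : Set (Set X), IsCellularIn univ C ∧ #C = topWeight X := by
  obtain ⟨l, hl, hwl⟩ := exists_cellular_seq_topWeight_le (X := X)
  have hκ : ℵ₀ < ⨆ n, l n := by
    by_contra! h
    exact hw.not_ge (hwl.trans ((mul_le_mul_right h _).trans aleph0_mul_aleph0.le))
  obtain ⟨C, hC, hκC⟩ := exists_cellular_iSup_le hl hκ
  exact ⟨C, hC, hC.mk_le_topWeight.antisymm
    ((hwl.trans (aleph0_mul_eq hκ.le).le).trans hκC)⟩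

end Pseudo

theorem exists_cellular_mk_eq_topWeight [MetricSpace X] :
    ∃ C : Set (Set X), IsCellularIn univ C ∧ #C = topWeight X := by
  rcases finite_or_infinite X with hX | hX
  · exact exists_cellular_mk_eq_topWeight_of_discrete
  rcases le_or_gt (topWeight X) ℵ₀ with hw | hw
  · obtain ⟨C, hC, hCℵ⟩ := exists_cellular_mk_eq_aleph0 (X := X)
    exact ⟨C, hC, hC.mk_le_topWeight.antisymm (hw.trans hCℵ.ge)⟩
  · exact exists_cellular_mk_eq_topWeight_of_aleph0_lt hw

end Metric

/-- If `X` is a metric space and `B` is a π-base for `X` (a family of nonempty open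
sets such that every nonempty open set contains a member), then there is a maximal
cellular family `S ⊆ B` with `|S| = w(X)`. -/
theorem stmt_9 {X : Type*} [MetricSpace X] (B : Set (Set X))
    (hB : ∀ U ∈ B, IsOpen U ∧ U.Nonempty)
    (hπ : ∀ V : Set X, IsOpen V → V.Nonempty → ∃ U ∈ B, U ⊆ V) :
    ∃ S : Set (Set X), S ⊆ B ∧
      (∀ U ∈ S, IsOpen U ∧ U.Nonempty) ∧ S.Pairwise Disjoint ∧
      (∀ V : Set X, IsOpen V → V.Nonempty → ∃ U ∈ S, (V ∩ U).Nonempty) ∧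
      Cardinal.mk S = topWeight X := by
  obtain ⟨C, hC, hCw⟩ := exists_cellular_mk_eq_topWeight (X := X)
  obtain ⟨C', hC'B, hC', hC'C⟩ := hC.exists_subset_mk_eq fun V hV =>
    let ⟨U, hUB, hUV⟩ := hπ V (hC.isOpen V hV) (hC.nonempty V hV)
    ⟨U, hUB, (hB U hUB).2, hUV⟩
  obtain ⟨S, hC'S, hSB, hS, hSmeets⟩ :=
    exists_pairwise_disjoint_superset_meetsEveryOpen (fun U hU => (hB U hU).2) hπ hC'B hC'
  have hScell : IsCellularIn univ S := .univ_of_pairwise (fun U hU => hB U (hSB hU)) hS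
  refine ⟨S, hSB, fun U hU => hB U (hSB hU), hS, hSmeets, hScell.mk_le_topWeight.antisymm ?_⟩
  rw [← hCw, ← hC'C]
  exact mk_le_mk_of_subset hC'S
end

section
/- If Z ⊆ κ^ω with |Z| < cf[κ]^ω, then Z is meager in κ^ω. Hence non(M_{κ^ω}) ≥ cf[κ]^ω. -/
/-! A point of `K^ω` has countable range, and for each `a : K` the points whose range misses `a`
form a closed nowhere dense set. Hence for countable `A ⊆ K` the points whose range does not
contain `A` form a meagre set. If `Z` is not meagre, every countable `A` therefore lies in the
range of some `z ∈ Z`, so the ranges of points of `Z` (padded to be infinite) form a cofinal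
family in `[K]^ω` of size at most `#Z`. The Baire category theorem supplies a non-meagre set. -/

open Set Cardinal

/-- The cardinal `cf [K]^ω`. -/
noncomputable def countableCofinality (K : Type*) : Cardinal :=
  sInf {c : Cardinal | ∃ F : Set (Set K),
    (∀ A ∈ F, A.Countable ∧ A.Infinite) ∧
    (∀ A : Set K, A.Countable → ∃ B ∈ F, A ⊆ B) ∧ Cardinal.mk F = c}

section RangeMeagre

variable {ι K : Type*} [TopologicalSpace K]

theorem dense_setOf_mem_range [Infinite ι] (a : K) : Dense {x : ι → K | a ∈ range x} := by
  classical
  rw [dense_iff_inter_open]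
  rintro U hU ⟨x, hx⟩
  obtain ⟨I, u, hu, hIU⟩ := isOpen_pi_iff.1 hU x hx
  obtain ⟨i, hi⟩ := Infinite.exists_notMem_finset I
  refine ⟨Function.update x i a, hIU fun j hj => ?_, i, Function.update_self i a x⟩
  rw [Function.update_of_ne (ne_of_mem_of_not_mem (Finset.mem_coe.1 hj) hi)]
  exact (hu j hj).2

variable [DiscreteTopology K]

theorem isOpen_setOf_mem_range (a : K) : IsOpen {x : ι → K | a ∈ range x} := by
  have : {x : ι → K | a ∈ range x} = ⋃ i, (fun x : ι → K => x i) ⁻¹' {a} := by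
    ext x
    simp
  rw [this]
  exact isOpen_iUnion fun i => (continuous_apply i).isOpen_preimage _ (isOpen_discrete _)

theorem isMeagre_setOf_notMem_range [Infinite ι] (a : K) :
    IsMeagre {x : ι → K | a ∉ range x} := by
  rw [IsMeagre, compl_ofPred]
  simpa only [not_not] using
    residual_of_dense_open (isOpen_setOf_mem_range a) (dense_setOf_mem_range a)

theorem isMeagre_setOf_not_subset_range [Infinite ι] {A : Set K} (hA : A.Countable) :
    IsMeagre {x : ι → K | ¬A ⊆ range x} := by
  have : {x : ι → K | ¬A ⊆ range x} = ⋃ a ∈ A, {x | a ∉ range x} := by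
    ext x
    simp [not_subset]
  rw [this]
  exact isMeagre_biUnion hA fun a _ => isMeagre_setOf_notMem_range a

theorem exists_subset_range_of_not_isMeagre [Infinite ι] {Z : Set (ι → K)} (hZ : ¬IsMeagre Z)
    {A : Set K} (hA : A.Countable) : ∃ z ∈ Z, A ⊆ range z := by
  by_contra! h
  exact hZ ((isMeagre_setOf_not_subset_range hA).mono h)

end RangeMeagre

section CountableCofinality

variable {K : Type*} [TopologicalSpace K] [DiscreteTopology K] [Infinite K]

theorem countableCofinality_le_mk_of_not_isMeagre {Z : Set (ℕ → K)} (hZ : ¬IsMeagre Z) :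
    countableCofinality K ≤ #Z := by
  set B₀ : Set K := range (Infinite.natEmbedding K)
  unfold countableCofinality
  refine (csInf_le' ?_).trans (mk_image_le (f := fun z => range z ∪ B₀) (s := Z))
  refine ⟨_, ?_, ?_, rfl⟩
  · rintro _ ⟨z, -, rfl⟩
    exact ⟨(countable_range z).union (countable_range _),
      (infinite_range_of_injective (Infinite.natEmbedding K).injective).mono subset_union_right⟩
  · intro A hA
    obtain ⟨z, hz, hAz⟩ := exists_subset_range_of_not_isMeagre hZ hA
    exact ⟨_, mem_image_of_mem _ hz, hAz.trans subset_union_left⟩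

end CountableCofinality

/-- Any subset of `K^ω` of cardinality less than `cf [K]^ω` is meager; hence the
uniformity of the meager ideal of `K^ω` is at least `cf [K]^ω`. Here `K` is an
infinite discrete space and `cf [K]^ω` is the least cardinality of a family of
countably infinite subsets of `K` such that every countable subset of `K` is
contained in a member. -/
theorem stmt_13 {K : Type*} [TopologicalSpace K] [DiscreteTopology K] [Infinite K] :
    (∀ Z : Set (ℕ → K),
      Cardinal.mk Z < sInf {c : Cardinal | ∃ F : Set (Set K),
        (∀ A ∈ F, A.Countable ∧ A.Infinite) ∧
        (∀ A : Set K, A.Countable → ∃ B ∈ F, A ⊆ B) ∧ Cardinal.mk F = c} →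
      IsMeagre Z) ∧
    sInf {c : Cardinal | ∃ F : Set (Set K),
        (∀ A ∈ F, A.Countable ∧ A.Infinite) ∧
        (∀ A : Set K, A.Countable → ∃ B ∈ F, A ⊆ B) ∧ Cardinal.mk F = c}
      ≤ sInf {c : Cardinal | ∃ Z : Set (ℕ → K), ¬ IsMeagre Z ∧ Cardinal.mk Z = c} := by
  refine ⟨fun Z hZ => ?_,
    le_csInf ⟨_, univ, not_isMeagre_of_isOpen isOpen_univ univ_nonempty, rfl⟩ ?_⟩
  · by_contra hZm
    exact (countableCofinality_le_mk_of_not_isMeagre hZm).not_gt hZ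
  · rintro _ ⟨Z, hZ, rfl⟩
    exact countableCofinality_le_mk_of_not_isMeagre hZ
end

section
/- Let X and Y be completely metrizable spaces and π_Y : X × Y → Y the projection. A set A ⊆ Y is meager in Y if and only if π_Y^{-1}(A) is meager in X × Y. -/
open Set Metric Filter Topology

/-!
The projection `Prod.snd` is continuous and open, so preimages of meagre sets are meagre.
Conversely it suffices that `Prod.snd` maps comeagre sets to comeagre sets. Given dense open
`V n ⊆ X × Y`, build levels of boxes `ball x r ×ˢ W`: level `n + 1` is a maximal family of boxes
with pairwise disjoint open windows `W`, each lying in `V n`, of radius `≤ 2⁻¹ ^ n` and refining a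
box of level `n`. Maximality makes the union of the windows of each level dense open. A point `y`
in all these unions lies in a unique nested chain of boxes, and completeness of `X` yields a point
`x` in all their balls, so `(x, y) ∈ ⋂ n, V n`.
-/

theorem exists_seq_of_forall_exists {α : Type*} {P : ℕ → α → Prop} {R : ℕ → α → α → Prop}
    (h₀ : ∃ a, P 0 a) (h : ∀ n a, P n a → ∃ b, P (n + 1) b ∧ R n a b) :
    ∃ f : ℕ → α, ∀ n, P n (f n) ∧ R n (f n) (f (n + 1)) := by
  obtain ⟨a₀, ha₀⟩ := h₀
  choose! g hgP hgR using h
  let f : ℕ → α := fun n => Nat.rec a₀ g n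
  have hf : ∀ n, P n (f n) := fun n => by
    induction n with
    | zero => exact ha₀
    | succ n ih => exact hgP n _ ih
  exact ⟨f, fun n => ⟨hf n, hgR n _ (hf n)⟩⟩

theorem exists_pairwiseDisjoint_subfamily_dense_biUnion {ι Y : Type*} [TopologicalSpace Y]
    (W : ι → Set Y) {C : Set ι} (hne : ∀ q ∈ C, (W q).Nonempty)
    (hC : ∀ O, IsOpen O → O.Nonempty → ∃ q ∈ C, W q ⊆ O) :
    ∃ M ⊆ C, M.PairwiseDisjoint W ∧ Dense (⋃ q ∈ M, W q) := by
  -- Vitali's covering lemma with zero weights is Zorn's lemma for disjoint subfamilies.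
  obtain ⟨M, hMC, hMW, hmeet⟩ := Vitali.exists_disjoint_subfamily_covering_enlargement W C 0 2
    one_lt_two (fun _ _ => le_rfl) 0 (fun _ _ => le_rfl) hne
  refine ⟨M, hMC, hMW, dense_iff_inter_open.2 fun O hO hOne => ?_⟩
  obtain ⟨q, hqC, hqO⟩ := hC O hO hOne
  obtain ⟨p, hpM, ⟨y, hyq, hyp⟩, -⟩ := hmeet q hqC
  exact ⟨y, hqO hyq, mem_biUnion hpM hyp⟩

theorem exists_forall_mem_ball_of_nested {X : Type*} [MetricSpace X] [CompleteSpace X]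
    {c : ℕ → X} {r : ℕ → ℝ} (hr₀ : ∀ n, 0 ≤ r n) (hr : Tendsto r atTop (𝓝 0))
    (hnest : ∀ n, closedBall (c (n + 1)) (r (n + 1)) ⊆ ball (c n) (r n)) :
    ∃ x, ∀ n, x ∈ ball (c n) (r n) := by
  have hanti : Antitone fun n => closedBall (c n) (r n) :=
    antitone_nat_of_succ_le fun n => (hnest n).trans ball_subset_closedBall
  obtain ⟨x, hx⟩ := nonempty_iInter_of_nonempty_biInter (fun n => isClosed_closedBall)
    (fun n => isBounded_closedBall)
    (fun N => ⟨c N, mem_iInter₂.2 fun n hn => hanti hn (mem_closedBall_self (hr₀ N))⟩)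
    (squeeze_zero (fun n => diam_nonneg) (fun n => diam_closedBall (hr₀ n))
      (by simpa using hr.const_mul 2))
  exact ⟨x, fun n => hnest n (mem_iInter.1 hx (n + 1))⟩

/-- `⟨x, r, W⟩` stands for the box `ball x r ×ˢ W` in `X × Y`. -/
structure BallBox (X Y : Type*) where
  center : X
  radius : ℝ
  window : Set Y

namespace BallBox

variable {X Y : Type*} [MetricSpace X]

structure FitsIn [TopologicalSpace Y] (p : BallBox X Y) (ε : ℝ) (D : Set (X × Y)) : Prop where
  radius_pos : 0 < p.radius
  radius_le : p.radius ≤ ε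
  isOpen_window : IsOpen p.window
  window_nonempty : p.window.Nonempty
  ball_prod_subset : ball p.center p.radius ×ˢ p.window ⊆ D

def Refines (q p : BallBox X Y) : Prop :=
  closedBall q.center q.radius ⊆ ball p.center p.radius ∧ q.window ⊆ p.window

variable [TopologicalSpace Y]

theorem exists_refines_fitsIn {D : Set (X × Y)} (hDo : IsOpen D) (hDd : Dense D)
    {ε : ℝ} (hε : 0 < ε) {p : BallBox X Y} (hp : 0 < p.radius) {O : Set Y} (hO : IsOpen O)
    (hOne : O.Nonempty) (hOp : O ⊆ p.window) :
    ∃ q : BallBox X Y, q.FitsIn ε D ∧ q.Refines p ∧ q.window ⊆ O := by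
  have hU : IsOpen (ball p.center p.radius ×ˢ O) := isOpen_ball.prod hO
  obtain ⟨z, hzD, hz⟩ := hDd.exists_mem_open hU ((nonempty_ball.2 hp).prod hOne)
  obtain ⟨u, v, hu, hv, hzu, hzv, huv⟩ := isOpen_prod_iff.1 (hDo.inter hU) z.1 z.2 ⟨hzD, hz⟩
  obtain ⟨ρ, hρ, hρu⟩ := Metric.isOpen_iff.1 (hu.inter isOpen_ball) z.1 ⟨hzu, hz.1⟩
  have hball : closedBall z.1 (min (ρ / 2) ε) ⊆ ball z.1 ρ :=
    closedBall_subset_ball (lt_of_le_of_lt (min_le_left _ _) (half_lt_self hρ))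
  refine ⟨⟨z.1, min (ρ / 2) ε, v ∩ O⟩, ⟨by positivity, min_le_right _ _, hv.inter hO,
    ⟨z.2, hzv, hz.2⟩, ?_⟩, ⟨?_, ?_⟩, inter_subset_right⟩
  · exact (prod_mono (ball_subset_closedBall.trans (hball.trans (hρu.trans inter_subset_left)))
      inter_subset_left).trans (huv.trans inter_subset_left)
  · exact hball.trans (hρu.trans inter_subset_right)
  · exact inter_subset_right.trans hOp

theorem exists_refinement {D : Set (X × Y)} (hDo : IsOpen D) (hDd : Dense D) {ε : ℝ}
    (hε : 0 < ε) {T : Set (BallBox X Y)} (hT : ∀ p ∈ T, 0 < p.radius ∧ IsOpen p.window)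
    (hTd : Dense (⋃ p ∈ T, p.window)) :
    ∃ T' : Set (BallBox X Y), T'.PairwiseDisjoint window ∧ Dense (⋃ q ∈ T', q.window) ∧
      ∀ q ∈ T', q.FitsIn ε D ∧ ∃ p ∈ T, q.Refines p := by
  set C := {q : BallBox X Y | q.FitsIn ε D ∧ ∃ p ∈ T, q.Refines p}
  have hC : ∀ O, IsOpen O → O.Nonempty → ∃ q ∈ C, q.window ⊆ O := by
    intro O hO hOne
    obtain ⟨y, hyO, hy⟩ := hTd.inter_open_nonempty O hO hOne
    obtain ⟨p, hpT, hyp⟩ := mem_iUnion₂.1 hy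
    obtain ⟨q, hqD, hqp, hqO⟩ := exists_refines_fitsIn hDo hDd hε (hT p hpT).1
      (hO.inter (hT p hpT).2) ⟨y, hyO, hyp⟩ inter_subset_right
    exact ⟨q, ⟨hqD, p, hpT, hqp⟩, hqO.trans inter_subset_left⟩
  obtain ⟨T', hT'C, hdisj, hdense⟩ :=
    exists_pairwiseDisjoint_subfamily_dense_biUnion window (fun q hq => hq.1.window_nonempty) hC
  exact ⟨T', hdisj, hdense, hT'C⟩

end BallBox

open BallBox

structure IsRefiningScheme {X Y : Type*} [MetricSpace X] [TopologicalSpace Y]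
    (V : ℕ → Set (X × Y)) (T : ℕ → Set (BallBox X Y)) : Prop where
  pairwiseDisjoint : ∀ n, (T n).PairwiseDisjoint window
  dense : ∀ n, Dense (⋃ p ∈ T n, p.window)
  radius_pos : ∀ n, ∀ p ∈ T n, 0 < p.radius
  isOpen_window : ∀ n, ∀ p ∈ T n, IsOpen p.window
  fitsIn : ∀ n, ∀ q ∈ T (n + 1), q.FitsIn (2⁻¹ ^ n) (V n)
  exists_refines : ∀ n, ∀ q ∈ T (n + 1), ∃ p ∈ T n, q.Refines p

section RefiningScheme

variable {X Y : Type*} [MetricSpace X] [TopologicalSpace Y] {V : ℕ → Set (X × Y)}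
  {T : ℕ → Set (BallBox X Y)}

theorem exists_isRefiningScheme [Nonempty X] (hVo : ∀ n, IsOpen (V n))
    (hVd : ∀ n, Dense (V n)) : ∃ T, IsRefiningScheme V T := by
  obtain ⟨T, hT⟩ := exists_seq_of_forall_exists
    (P := fun _ (T : Set (BallBox X Y)) => T.PairwiseDisjoint window ∧ Dense (⋃ p ∈ T, p.window) ∧
      ∀ p ∈ T, 0 < p.radius ∧ IsOpen p.window)
    (R := fun n (T T' : Set (BallBox X Y)) =>
      ∀ q ∈ T', q.FitsIn (2⁻¹ ^ n) (V n) ∧ ∃ p ∈ T, q.Refines p)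
    ⟨{⟨Classical.arbitrary X, 1, univ⟩}, pairwiseDisjoint_singleton _ _, by simp, by simp⟩
    fun n T hT => by
      obtain ⟨T', hdisj, hdense, hT'⟩ :=
        exists_refinement (hVo n) (hVd n) (ε := 2⁻¹ ^ n) (by positivity) hT.2.2 hT.2.1
      exact ⟨T', ⟨hdisj, hdense, fun q hq => ⟨(hT' q hq).1.radius_pos,
        (hT' q hq).1.isOpen_window⟩⟩, hT'⟩
  exact ⟨T, fun n => (hT n).1.1, fun n => (hT n).1.2.1, fun n p hp => ((hT n).1.2.2 p hp).1,
    fun n p hp => ((hT n).1.2.2 p hp).2, fun n q hq => ((hT n).2 q hq).1,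
    fun n q hq => ((hT n).2 q hq).2⟩

namespace IsRefiningScheme

theorem exists_chain (hT : IsRefiningScheme V T) {y : Y}
    (hy : ∀ n, y ∈ ⋃ p ∈ T n, p.window) :
    ∃ p : ℕ → BallBox X Y, ∀ n, (p n ∈ T n ∧ y ∈ (p n).window) ∧ (p (n + 1)).Refines (p n) := by
  obtain ⟨p₀, hp₀T, hyp₀⟩ := mem_iUnion₂.1 (hy 0)
  refine exists_seq_of_forall_exists (P := fun n p => p ∈ T n ∧ y ∈ p.window)
    (R := fun _ p q => q.Refines p) ⟨p₀, hp₀T, hyp₀⟩ fun n p ⟨hpT, hyp⟩ => ?_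
  obtain ⟨q, hqT, hyq⟩ := mem_iUnion₂.1 (hy (n + 1))
  obtain ⟨p', hp'T, hqp'⟩ := hT.exists_refines n q hqT
  -- the windows at level `n` are disjoint, so the parent of `q` is the box through `y`
  obtain rfl : p' = p := (hT.pairwiseDisjoint n).elim hp'T hpT
    (not_disjoint_iff.2 ⟨y, hqp'.2 hyq, hyp⟩)
  exact ⟨q, ⟨hqT, hyq⟩, hqp'⟩

theorem iInter_subset_image_snd [CompleteSpace X] (hT : IsRefiningScheme V T) :
    ⋂ n, ⋃ p ∈ T n, p.window ⊆ Prod.snd '' ⋂ n, V n := by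
  intro y hy
  obtain ⟨p, hp⟩ := hT.exists_chain (mem_iInter.1 hy)
  have hfit : ∀ n, (p (n + 1)).FitsIn (2⁻¹ ^ n) (V n) := fun n => hT.fitsIn n _ (hp (n + 1)).1.1
  have hr₀ : ∀ n, 0 ≤ (p n).radius := fun n => (hT.radius_pos n _ (hp n).1.1).le
  have hr : Tendsto (fun n => (p n).radius) atTop (𝓝 0) :=
    (tendsto_add_atTop_iff_nat 1).1 <| squeeze_zero (fun n => hr₀ (n + 1))
      (fun n => (hfit n).radius_le) (tendsto_pow_atTop_nhds_zero_of_lt_one (by norm_num)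
        (by norm_num))
  obtain ⟨x, hx⟩ := exists_forall_mem_ball_of_nested (c := fun n => (p n).center) hr₀ hr
    fun n => (hp n).2.1
  exact ⟨(x, y), mem_iInter.2 fun n => (hfit n).ball_prod_subset ⟨hx (n + 1), (hp (n + 1)).1.2⟩,
    rfl⟩

theorem iInter_mem_residual (hT : IsRefiningScheme V T) :
    ⋂ n, ⋃ p ∈ T n, p.window ∈ residual Y :=
  countable_iInter_mem.2 fun n =>
    residual_of_dense_open (isOpen_biUnion (hT.isOpen_window n)) (hT.dense n)

end IsRefiningScheme

end RefiningScheme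

theorem image_snd_mem_residual {X Y : Type*} [MetricSpace X] [CompleteSpace X] [Nonempty X]
    [TopologicalSpace Y] {G : Set (X × Y)} (hG : G ∈ residual (X × Y)) :
    Prod.snd '' G ∈ residual Y := by
  obtain ⟨S, hSo, hSd, hSc, hSG⟩ := mem_residual_iff.1 hG
  -- adding `univ` makes the family nonempty, hence enumerable by `ℕ`
  obtain ⟨V, hV⟩ := (hSc.insert univ).exists_eq_range (insert_nonempty _ _)
  have hVS : ∀ n, V n = univ ∨ V n ∈ S := fun n => by
    rw [← mem_insert_iff, hV]; exact mem_range_self n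
  obtain ⟨T, hT⟩ := exists_isRefiningScheme (V := V)
    (fun n => (hVS n).elim (fun h => h ▸ isOpen_univ) (hSo _))
    (fun n => (hVS n).elim (fun h => h ▸ dense_univ) (hSd _))
  have hVG : ⋂ n, V n ⊆ G := by
    rwa [← sInter_range, ← hV, sInter_insert, univ_inter]
  exact mem_of_superset hT.iInter_mem_residual (hT.iInter_subset_image_snd.trans (image_mono hVG))

theorem stmt_15_general {X Y : Type*} [MetricSpace X] [CompleteSpace X] [Nonempty X]
    [MetricSpace Y] (A : Set Y) :
    IsMeagre A ↔ IsMeagre (Prod.snd ⁻¹' A : Set (X × Y)) := by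
  refine ⟨fun h => h.preimage_of_isOpenMap continuous_snd isOpenMap_snd, fun h => ?_⟩
  exact mem_of_superset (image_snd_mem_residual h) (image_subset_iff.2 subset_rfl)

/-- Kuratowski–Ulam-type lemma: for completely metrizable spaces `X` (nonempty) and
`Y`, with `π_Y : X × Y → Y` the projection, a set `A ⊆ Y` is meager in `Y` if and
only if `π_Y⁻¹(A)` is meager in `X × Y`. -/
theorem stmt_15 {X Y : Type*} [MetricSpace X] [CompleteSpace X] [Nonempty X]
    [MetricSpace Y] [CompleteSpace Y] (A : Set Y) :
    IsMeagre A ↔ IsMeagre (Prod.snd ⁻¹' A : Set (X × Y)) :=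
  stmt_15_general A
end

section
/- For any infinite cardinal κ, cof(ω^κ, ≤) ≤ cof(NWD_{κ^ω}), where ω^κ is the set of functions κ → ω ordered pointwise and cof denotes cofinality of the poset, and NWD_{κ^ω} is the ideal of nowhere dense subsets of the product space κ^ω ordered by inclusion. -/
/-!
The Tukey maps `f ↦ K_f` and `E ↦ g_E` show that `ω^κ` is Tukey below `NWD(κ^ω)`: `K_f` is a
closed set with empty interior, and if `K_f ⊆ E` with `E` nowhere dense, then any cylinder
`[s]` with `s 0 = α` that misses `E` must be longer than `f α`, for otherwise it would
contain the point of `K_f` extending `s` by a constant. Hence the image under `E ↦ g_E` of a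
cofinal family of nowhere dense sets is dominating in `ω^κ`.
-/

open Set PiNat

universe u

theorem sInf_card_cofinal_le_of_tukey {α β : Type u} [LE α] [Preorder β] {S : Set β}
    (φ : α → β) (ψ : β → α) (hφ : ∀ a, φ a ∈ S) (hψ : ∀ a, ∀ b ∈ S, φ a ≤ b → a ≤ ψ b) :
    sInf {c : Cardinal | ∃ F : Set α, (∀ a : α, ∃ f ∈ F, a ≤ f) ∧ Cardinal.mk F = c}
      ≤ sInf {c : Cardinal | ∃ F : Set β, (∀ b ∈ F, b ∈ S) ∧
          (∀ b ∈ S, ∃ t ∈ F, b ≤ t) ∧ Cardinal.mk F = c} := by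
  refine le_csInf ⟨_, S, fun _ hb => hb, fun b hb => ⟨b, hb, le_rfl⟩, rfl⟩ ?_
  rintro c ⟨F, hFS, hF, rfl⟩
  have hdom : ∀ a : α, ∃ f ∈ ψ '' F, a ≤ f := fun a => by
    obtain ⟨t, htF, hat⟩ := hF (φ a) (hφ a)
    exact ⟨ψ t, mem_image_of_mem ψ htF, hψ a t (hFS t htF) hat⟩
  calc _ ≤ Cardinal.mk (ψ '' F) := csInf_le' <| by exact ⟨ψ '' F, hdom, rfl⟩
    _ ≤ Cardinal.mk F := Cardinal.mk_image_le

section NowhereDense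

variable {K : Type*} [TopologicalSpace K] [DiscreteTopology K]

/-- The function `g_E` (junk value `0` if no cylinder starting with `α` misses `E`, which cannot
happen for nowhere dense `E`). -/
noncomputable def escapeLength (E : Set (ℕ → K)) (α : K) : ℕ :=
  sInf {n | ∃ x : ℕ → K, x 0 = α ∧ Disjoint E (cylinder x n)}

theorem IsNowhereDense.exists_disjoint_cylinder {E : Set (ℕ → K)} (hE : IsNowhereDense E)
    (α : K) : ∃ n, ∃ x : ℕ → K, x 0 = α ∧ Disjoint E (cylinder x n) := by
  have hα : ¬ cylinder (fun _ => α) 1 ⊆ closure E := fun h =>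
    (interior_maximal h (isOpen_cylinder (fun _ => K) _ 1)).trans_eq hE (self_mem_cylinder _ 1)
  obtain ⟨x, hxα, hxE⟩ := not_subset.1 hα
  obtain ⟨n, hn⟩ := PiNat.exists_disjoint_cylinder isClosed_closure hxE
  exact ⟨n, x, hxα 0 one_pos, hn.mono_left subset_closure⟩

/-- The set `K_f`, with an arbitrary point `c` in place of `0`. -/
def constAfter (c : K) (f : K → ℕ) : Set (ℕ → K) := {x | ∀ n, f (x 0) < n → x n = c}

theorem isClosed_constAfter (c : K) (f : K → ℕ) : IsClosed (constAfter c f) := by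
  have hK : constAfter c f = ⋂ n, {x : ℕ → K | f (x 0) < n → x n = c} := by
    ext; simp [constAfter]
  rw [hK]
  refine isClosed_iInter fun n =>
    isClosed_imp ?_ (isClosed_eq (continuous_apply n) continuous_const)
  exact (isOpen_discrete {a : K | f a < n}).preimage
    (continuous_apply 0 : Continuous fun x : ℕ → K => x 0)

theorem isNowhereDense_constAfter {c c' : K} (hc : c' ≠ c) (f : K → ℕ) :
    IsNowhereDense (constAfter c f) := by
  rw [(isClosed_constAfter c f).isNowhereDense_iff, eq_empty_iff_forall_notMem]
  intro x hx
  obtain ⟨_, ⟨y, n, rfl⟩, hxy, hsub⟩ :=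
    ((isTopologicalBasis_cylinders _).mem_nhds_iff).1 (mem_interior_iff_mem_nhds.1 hx)
  rw [mem_cylinder_iff_eq] at hxy
  set m := max n (f (x 0) + 1)
  have hmem : Function.update x m c' ∈ constAfter c f :=
    hsub <| hxy ▸ cylinder_anti x (le_max_left _ _) (update_mem_cylinder x m c')
  have hx0 : Function.update x m c' 0 = x 0 := Function.update_of_ne (by omega) _ _
  have := hmem m (by rw [hx0]; omega)
  rw [Function.update_self] at this
  exact hc this

theorem le_escapeLength {c : K} {f : K → ℕ} {E : Set (ℕ → K)} (hE : IsNowhereDense E)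
    (hsub : constAfter c f ⊆ E) (α : K) : f α ≤ escapeLength E α := by
  refine le_csInf (hE.exists_disjoint_cylinder α) ?_
  rintro n ⟨x, hxα, hdisj⟩
  by_contra! hn
  let y : ℕ → K := fun m => if m < n then x m else c
  have hy : y ∈ cylinder x n := fun m hm => if_pos hm
  have hyK : y ∈ constAfter c f := fun m hm => if_neg fun hmn => by
    have hy0 : y 0 = α := (hy 0 (by omega)).trans hxα
    rw [hy0] at hm
    omega
  exact hdisj.ne_of_mem (hsub hyK) hy rfl

end NowhereDense

/-- The cofinality of the poset `(ω^K, ≤)` of functions `K → ℕ` ordered pointwise is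
at most the cofinality of the ideal of nowhere dense subsets of `K^ω`. -/
theorem stmt_18 {K : Type*} [TopologicalSpace K] [DiscreteTopology K] [Infinite K] :
    sInf {c : Cardinal | ∃ F : Set (K → ℕ),
        (∀ g : K → ℕ, ∃ f ∈ F, g ≤ f) ∧ Cardinal.mk F = c}
      ≤ sInf {c : Cardinal | ∃ F : Set (Set (ℕ → K)), (∀ s ∈ F, IsNowhereDense s) ∧
          (∀ s : Set (ℕ → K), IsNowhereDense s → ∃ t ∈ F, s ⊆ t) ∧ Cardinal.mk F = c} := by
  obtain ⟨c', c, hc⟩ := exists_pair_ne K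
  exact sInf_card_cofinal_le_of_tukey (S := {s | IsNowhereDense s}) (constAfter c) escapeLength
    (isNowhereDense_constAfter hc) fun _ _ hE hsub => le_escapeLength hE hsub
end
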